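/- arXiv:2011.12098 — 5 statements merged into one kernel-verified Lean document; each statement's English description precedes it below -/
import Mathlib

section
/- Let U and V be real Hilbert spaces, b : U × V → ℝ a bounded bilinear form, and Θ : U → V the trial-to-test operator, i.e. the (unique) map satisfying ⟪Θz, v⟫_V = b(z, v) for all z ∈ U and v ∈ V. Let L : V → ℝ be a continuous linear functional with Riesz representative ℓ ∈ V, let U_h ⊆ U be a subspace, and let u_h ∈ U_h. Then the following are equivalent: (i) b(u_h, Θw) = L(Θw) for all w ∈ U_h; (ii) ‖Θ u_h − ℓ‖_V ≤ ‖Θ w − ℓ‖_V for all w ∈ U_h. -/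
open RealInnerProductSpace

/-!
Since `⟪Θz, v⟫ = b(z, v)` determines `Θz`, the map `Θ` is linear, so `Θ(U_h)` is a subspace
of `V`. The Galerkin condition says that the residual `Θu_h − ℓ` is orthogonal to `Θ(U_h)`,
and in an inner product space this characterises `Θu_h` as the best approximation of `ℓ`
from `Θ(U_h)`.
-/

theorem norm_sub_eq_iInf_iff_forall_norm_sub_le {E : Type*} [SeminormedAddCommGroup E]
    {K : Set E} {u v : E} (hv : v ∈ K) :
    ‖u - v‖ = ⨅ w : K, ‖u - w‖ ↔ ∀ w ∈ K, ‖u - v‖ ≤ ‖u - w‖ := by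
  have hbdd : BddBelow (Set.range fun w : K ↦ ‖u - w‖) :=
    ⟨0, Set.forall_mem_range.2 fun _ ↦ norm_nonneg _⟩
  refine ⟨fun h w hw ↦ h ▸ ciInf_le hbdd ⟨w, hw⟩, fun h ↦ le_antisymm ?_ (ciInf_le hbdd ⟨v, hv⟩)⟩
  have : Nonempty K := ⟨⟨v, hv⟩⟩
  exact le_ciInf fun w ↦ h w w.2

theorem Submodule.forall_norm_sub_le_iff_inner_eq_zero {F : Type*} [NormedAddCommGroup F]
    [InnerProductSpace ℝ F] (K : Submodule ℝ F) {u v : F} (hv : v ∈ K) :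
    (∀ w ∈ K, ‖u - v‖ ≤ ‖u - w‖) ↔ ∀ w ∈ K, ⟪u - v, w⟫ = 0 :=
  (norm_sub_eq_iInf_iff_forall_norm_sub_le (K := (K : Set F)) hv).symm.trans
    (norm_eq_iInf_iff_real_inner_eq_zero K hv)

/-- The trial-to-test operator, bundled as a linear map. -/
def LinearMap.ofInnerEq {U V : Type*} [AddCommGroup U] [Module ℝ U] [NormedAddCommGroup V]
    [InnerProductSpace ℝ V] (b : U →ₗ[ℝ] V →ₗ[ℝ] ℝ) (Θ : U → V)
    (hΘ : ∀ (z : U) (v : V), ⟪Θ z, v⟫ = b z v) : U →ₗ[ℝ] V where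
  toFun := Θ
  map_add' z z' := ext_inner_right ℝ fun v ↦ by simp only [inner_add_left, hΘ, map_add,
    LinearMap.add_apply]
  map_smul' t z := ext_inner_right ℝ fun v ↦ by simp only [real_inner_smul_left, hΘ,
    map_smul, LinearMap.smul_apply, smul_eq_mul, RingHom.id_apply]

theorem stmt2_general {U V : Type*}
    [NormedAddCommGroup U] [InnerProductSpace ℝ U]
    [NormedAddCommGroup V] [InnerProductSpace ℝ V]
    (b : U →ₗ[ℝ] V →ₗ[ℝ] ℝ)
    (Θ : U → V) (hΘ : ∀ (z : U) (v : V), ⟪Θ z, v⟫ = b z v)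
    (L : V →L[ℝ] ℝ) (ℓ : V) (hℓ : ∀ v : V, L v = ⟪ℓ, v⟫)
    (Uh : Submodule ℝ U) (uh : U) (huh : uh ∈ Uh) :
    (∀ w ∈ Uh, b uh (Θ w) = L (Θ w)) ↔ (∀ w ∈ Uh, ‖Θ uh - ℓ‖ ≤ ‖Θ w - ℓ‖) := by
  have hgalerkin (w : U) : b uh (Θ w) = L (Θ w) ↔ ⟪ℓ - Θ uh, Θ w⟫ = 0 := by
    rw [inner_sub_left, hΘ, hℓ, sub_eq_zero, eq_comm]
  have hbest := (Uh.map (LinearMap.ofInnerEq b Θ hΘ)).forall_norm_sub_le_iff_inner_eq_zero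
    (u := ℓ) (Submodule.mem_map_of_mem huh)
  simp only [Submodule.mem_map, forall_exists_index, and_imp, forall_apply_eq_imp_iff₂] at hbest
  simp only [hgalerkin, norm_sub_rev _ ℓ]
  exact hbest.symm

/-- The DPG method with optimal test functions (Galerkin scheme tested with `Θ(U_h)`)
is exactly the minimum residual method: `b(u_h, Θw) = L(Θw)` for all `w ∈ U_h` iff
`‖Θu_h − ℓ‖ ≤ ‖Θw − ℓ‖` for all `w ∈ U_h`, where `ℓ` is the Riesz representative of `L`
and `Θ` is the trial-to-test operator, `⟪Θz, v⟫ = b(z, v)`. -/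
theorem stmt2 {U V : Type*}
    [NormedAddCommGroup U] [InnerProductSpace ℝ U] [CompleteSpace U]
    [NormedAddCommGroup V] [InnerProductSpace ℝ V] [CompleteSpace V]
    (b : U →ₗ[ℝ] V →ₗ[ℝ] ℝ) (Cb : ℝ) (hb : ∀ (z : U) (v : V), |b z v| ≤ Cb * ‖z‖ * ‖v‖)
    (Θ : U → V) (hΘ : ∀ (z : U) (v : V), ⟪Θ z, v⟫ = b z v)
    (L : V →L[ℝ] ℝ) (ℓ : V) (hℓ : ∀ v : V, L v = ⟪ℓ, v⟫)
    (Uh : Submodule ℝ U) (uh : U) (huh : uh ∈ Uh) :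
    (∀ w ∈ Uh, b uh (Θ w) = L (Θ w)) ↔ (∀ w ∈ Uh, ‖Θ uh - ℓ‖ ≤ ‖Θ w - ℓ‖) :=
  stmt2_general b Θ hΘ L ℓ hℓ Uh uh huh
end

section
/- Let H and K be real inner product spaces and d > 0. Let v, g₁ ∈ H and w, g₂ ∈ K satisfy ‖v‖ ≤ d·‖w‖ and ‖w‖² = ⟪g₂, w⟫ + ⟪g₁, v⟫. Then d⁻²·‖v‖² + ‖w‖² + ‖g₂ − w‖² + d²·‖g₁‖² ≤ (3 + 2√2)·(d²·‖g₁‖² + ‖g₂‖²). -/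
/-!
Testing the energy identity with the Cauchy–Schwarz and Poincaré inequalities gives
`‖w‖² ≤ (‖g₂‖ + d‖g₁‖)‖w‖`, hence `‖w‖ ≤ ‖g₂‖ + d‖g₁‖`. Expanding `‖g₂ - w‖²` and using the
identity once more bounds the left-hand side by `(‖w‖ + d‖g₁‖)² + ‖g₂‖² ≤ (‖g₂‖ + 2d‖g₁‖)² + ‖g₂‖²`.
This quadratic form in `(‖g₂‖, d‖g₁‖)` has largest eigenvalue `3 + √5 < 3 + 2√2`.
-/

open RealInnerProductSpace

section

variable {H K : Type*} [NormedAddCommGroup H] [InnerProductSpace ℝ H]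
  [NormedAddCommGroup K] [InnerProductSpace ℝ K]

theorem inner_le_mul_norm_mul_norm_of_norm_le {E : Type*} [SeminormedAddGroup E]
    {d : ℝ} {v g : H} {w : E} (hP : ‖v‖ ≤ d * ‖w‖) :
    ⟪g, v⟫ ≤ d * ‖g‖ * ‖w‖ :=
  calc ⟪g, v⟫ ≤ ‖g‖ * ‖v‖ := real_inner_le_norm g v
    _ ≤ ‖g‖ * (d * ‖w‖) := mul_le_mul_of_nonneg_left hP (norm_nonneg g)
    _ = d * ‖g‖ * ‖w‖ := by ring

theorem norm_le_of_sq_norm_eq_inner_add_inner {d : ℝ} (hd : 0 ≤ d) {v g₁ : H} {w g₂ : K}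
    (hP : ‖v‖ ≤ d * ‖w‖) (hW : ‖w‖ ^ 2 = ⟪g₂, w⟫ + ⟪g₁, v⟫) :
    ‖w‖ ≤ ‖g₂‖ + d * ‖g₁‖ := by
  rcases (norm_nonneg w).eq_or_lt with hw | hw
  · rw [← hw]
    positivity
  · have h : ‖w‖ * ‖w‖ ≤ (‖g₂‖ + d * ‖g₁‖) * ‖w‖ := by
      linarith [real_inner_le_norm g₂ w, inner_le_mul_norm_mul_norm_of_norm_le (g := g₁) hP]
    exact le_of_mul_le_mul_right h hw

theorem stability_le_sq_add_sq {d : ℝ} (hd : 0 < d) {v g₁ : H} {w g₂ : K}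
    (hP : ‖v‖ ≤ d * ‖w‖) (hW : ‖w‖ ^ 2 = ⟪g₂, w⟫ + ⟪g₁, v⟫) :
    (d ^ 2)⁻¹ * ‖v‖ ^ 2 + ‖w‖ ^ 2 + ‖g₂ - w‖ ^ 2 + d ^ 2 * ‖g₁‖ ^ 2 ≤
      (‖w‖ + d * ‖g₁‖) ^ 2 + ‖g₂‖ ^ 2 := by
  have hv : (d ^ 2)⁻¹ * ‖v‖ ^ 2 ≤ ‖w‖ ^ 2 := by
    rw [inv_mul_le_iff₀ (by positivity), ← mul_pow]
    exact pow_le_pow_left₀ (norm_nonneg v) hP 2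
  have hg₁ := inner_le_mul_norm_mul_norm_of_norm_le (g := g₁) hP
  rw [norm_sub_sq_real]
  linarith

end

theorem sq_add_two_mul_add_sq_le (b c : ℝ) :
    (b + 2 * c) ^ 2 + b ^ 2 ≤ (3 + 2 * √2) * (c ^ 2 + b ^ 2) := by
  have hs : √2 ^ 2 = 2 := Real.sq_sqrt zero_le_two
  have hpos : 0 < 1 + 2 * √2 := by positivity
  -- `(1 + 2√2) · (rhs - lhs) = (2c - (1 + 2√2) b)² + 3c²`
  refine le_of_mul_le_mul_left ?_ hpos
  nlinarith [sq_nonneg (2 * c - (1 + 2 * √2) * b), sq_nonneg c]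

/-- Abstract form of the full scaled adjoint stability bound in the proof of Theorem 2.3:
with `w = ∇v` and adjoint flux `τ = g₂ − w` (so that `div τ = g₁`),
`d⁻²‖v‖² + ‖w‖² + ‖g₂ − w‖² + d²‖g₁‖² ≤ (3 + 2√2)(d²‖g₁‖² + ‖g₂‖²)`. -/
theorem stmt6 {H K : Type*}
    [NormedAddCommGroup H] [InnerProductSpace ℝ H]
    [NormedAddCommGroup K] [InnerProductSpace ℝ K]
    (d : ℝ) (hd : 0 < d) (v g₁ : H) (w g₂ : K)
    (hP : ‖v‖ ≤ d * ‖w‖) (hW : ‖w‖ ^ 2 = ⟪g₂, w⟫ + ⟪g₁, v⟫) :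
    (d ^ 2)⁻¹ * ‖v‖ ^ 2 + ‖w‖ ^ 2 + ‖g₂ - w‖ ^ 2 + d ^ 2 * ‖g₁‖ ^ 2 ≤
      (3 + 2 * Real.sqrt 2) * (d ^ 2 * ‖g₁‖ ^ 2 + ‖g₂‖ ^ 2) := by
  have hw : ‖w‖ + d * ‖g₁‖ ≤ ‖g₂‖ + 2 * (d * ‖g₁‖) := by
    linarith [norm_le_of_sq_norm_eq_inner_add_inner hd.le hP hW]
  calc _ ≤ (‖w‖ + d * ‖g₁‖) ^ 2 + ‖g₂‖ ^ 2 := stability_le_sq_add_sq hd hP hW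
    _ ≤ (‖g₂‖ + 2 * (d * ‖g₁‖)) ^ 2 + ‖g₂‖ ^ 2 := by gcongr
    _ ≤ (3 + 2 * √2) * ((d * ‖g₁‖) ^ 2 + ‖g₂‖ ^ 2) := sq_add_two_mul_add_sq_le _ _
    _ = _ := by ring
end

section
/- Let H and K be real inner product spaces, d > 0, and let 𝒞 : K → K be a linear map with ⟪𝒞Q, P⟫ = ⟪Q, 𝒞P⟫ for all Q, P ∈ K, and constants 0 < c₁ ≤ c₂ such that c₁·‖Q‖² ≤ ⟪𝒞Q, Q⟫ and ‖𝒞Q‖ ≤ c₂·‖Q‖ for all Q ∈ K. Let v, g₁ ∈ H and W, G₂ ∈ K satisfy ‖v‖ ≤ d²·‖W‖ and ⟪𝒞W, W⟫ = ⟪𝒞G₂, W⟫ − ⟪g₁, v⟫. Then d⁻⁴·‖v‖² + ‖W‖² ≤ (4·max(c₂,1)²/c₁²)·(d⁴·‖g₁‖² + ‖G₂‖²). -/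
/-!
Testing the weak formulation with the solution itself and using coercivity gives
`c₁‖W‖² ≤ ⟪𝒞G₂, W⟫ − ⟪g₁, v⟫ ≤ (c₂‖G₂‖ + d²‖g₁‖)‖W‖`, hence
`c₁‖W‖ ≤ max(c₂,1)(d²‖g₁‖ + ‖G₂‖)`. Squaring with `(a + b)² ≤ 2(a² + b²)` bounds `‖W‖²`, and
the Poincaré estimate bounds `d⁻⁴‖v‖²` by `‖W‖²`, which accounts for the remaining factor `2`.
-/

open RealInnerProductSpace

theorem mul_norm_le_of_coercive_of_inner_eq {H K : Type*}
    [NormedAddCommGroup H] [InnerProductSpace ℝ H]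
    [NormedAddCommGroup K] [InnerProductSpace ℝ K]
    (𝒞 : K →ₗ[ℝ] K) {c₁ c₂ r : ℝ} (hc₂ : 0 ≤ c₂) (hr : 0 ≤ r)
    (hcoer : ∀ Q : K, c₁ * ‖Q‖ ^ 2 ≤ ⟪𝒞 Q, Q⟫)
    (hbdd : ∀ Q : K, ‖𝒞 Q‖ ≤ c₂ * ‖Q‖)
    {v g₁ : H} {W G₂ : K} (hP : ‖v‖ ≤ r * ‖W‖)
    (hW : ⟪𝒞 W, W⟫ = ⟪𝒞 G₂, W⟫ - ⟪g₁, v⟫) :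
    c₁ * ‖W‖ ≤ c₂ * ‖G₂‖ + r * ‖g₁‖ := by
  have hG₂ : ⟪𝒞 G₂, W⟫ ≤ c₂ * ‖G₂‖ * ‖W‖ :=
    (real_inner_le_norm _ _).trans (mul_le_mul_of_nonneg_right (hbdd G₂) (norm_nonneg W))
  have hg₁ : -⟪g₁, v⟫ ≤ ‖g₁‖ * (r * ‖W‖) :=
    (neg_le_abs _).trans <| (abs_real_inner_le_norm g₁ v).trans <|
      mul_le_mul_of_nonneg_left hP (norm_nonneg g₁)
  have hsq : c₁ * ‖W‖ * ‖W‖ ≤ (c₂ * ‖G₂‖ + r * ‖g₁‖) * ‖W‖ := by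
    linarith [hcoer W]
  rcases (norm_nonneg W).eq_or_lt with hW0 | hWpos
  · rw [← hW0, mul_zero]
    positivity
  · exact le_of_mul_le_mul_right hsq hWpos

theorem inv_sq_mul_sq_le_sq_of_le_mul {a x y : ℝ} (hx : 0 ≤ x) (h : x ≤ a * y) :
    (a ^ 2)⁻¹ * x ^ 2 ≤ y ^ 2 := by
  rcases eq_or_ne a 0 with rfl | ha
  · simpa using sq_nonneg y
  · rw [inv_mul_le_iff₀ (by positivity), ← mul_pow]
    exact pow_le_pow_left₀ hx h 2

theorem sq_le_of_mul_le_mul_add {c M w a b : ℝ} (hc : 0 < c) (hw : 0 ≤ w)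
    (h : c * w ≤ M * (a + b)) :
    w ^ 2 ≤ 2 * M ^ 2 / c ^ 2 * (a ^ 2 + b ^ 2) := by
  rw [div_mul_eq_mul_div, le_div_iff₀ (by positivity)]
  calc w ^ 2 * c ^ 2 = (c * w) ^ 2 := by ring
    _ ≤ (M * (a + b)) ^ 2 := pow_le_pow_left₀ (by positivity) h 2
    _ = M ^ 2 * (a + b) ^ 2 := mul_pow _ _ _
    _ ≤ M ^ 2 * (2 * (a ^ 2 + b ^ 2)) := mul_le_mul_of_nonneg_left add_sq_le (sq_nonneg M)
    _ = 2 * M ^ 2 * (a ^ 2 + b ^ 2) := by ring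

theorem stmt8_general {H K : Type*}
    [NormedAddCommGroup H] [InnerProductSpace ℝ H]
    [NormedAddCommGroup K] [InnerProductSpace ℝ K]
    (d : ℝ)
    (𝒞 : K →ₗ[ℝ] K)
    (c₁ c₂ : ℝ) (hc₁ : 0 < c₁)
    (hcoer : ∀ Q : K, c₁ * ‖Q‖ ^ 2 ≤ ⟪𝒞 Q, Q⟫)
    (hbdd : ∀ Q : K, ‖𝒞 Q‖ ≤ c₂ * ‖Q‖)
    (v g₁ : H) (W G₂ : K)
    (hP : ‖v‖ ≤ d ^ 2 * ‖W‖)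
    (hW : ⟪𝒞 W, W⟫ = ⟪𝒞 G₂, W⟫ - ⟪g₁, v⟫) :
    (d ^ 4)⁻¹ * ‖v‖ ^ 2 + ‖W‖ ^ 2 ≤
      4 * max c₂ 1 ^ 2 / c₁ ^ 2 * (d ^ 4 * ‖g₁‖ ^ 2 + ‖G₂‖ ^ 2) := by
  set M := max c₂ 1
  have hM : 1 ≤ M := le_max_right _ _
  have hbddM : ∀ Q : K, ‖𝒞 Q‖ ≤ M * ‖Q‖ := fun Q =>
    (hbdd Q).trans (mul_le_mul_of_nonneg_right (le_max_left _ _) (norm_nonneg Q))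
  have hWlin : c₁ * ‖W‖ ≤ M * (d ^ 2 * ‖g₁‖ + ‖G₂‖) := by
    have hg₁ : d ^ 2 * ‖g₁‖ ≤ M * (d ^ 2 * ‖g₁‖) := le_mul_of_one_le_left (by positivity) hM
    linarith [mul_norm_le_of_coercive_of_inner_eq 𝒞 (by linarith) (sq_nonneg d) hcoer hbddM hP hW]
  have hWsq := sq_le_of_mul_le_mul_add hc₁ (norm_nonneg W) hWlin
  have hv : (d ^ 4)⁻¹ * ‖v‖ ^ 2 ≤ ‖W‖ ^ 2 := by
    simpa only [← pow_mul] using inv_sq_mul_sq_le_sq_of_le_mul (norm_nonneg v) hP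
  calc (d ^ 4)⁻¹ * ‖v‖ ^ 2 + ‖W‖ ^ 2 ≤ 2 * ‖W‖ ^ 2 := by linarith
    _ ≤ 2 * (2 * M ^ 2 / c₁ ^ 2 * ((d ^ 2 * ‖g₁‖) ^ 2 + ‖G₂‖ ^ 2)) := by gcongr
    _ = 4 * M ^ 2 / c₁ ^ 2 * (d ^ 4 * ‖g₁‖ ^ 2 + ‖G₂‖ ^ 2) := by ring

/-- Abstract form of the scaled adjoint stability bound (3.18) for the Kirchhoff–Love
plate: with a symmetric, coercive, bounded material tensor `𝒞`, the Poincaré-type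
estimate `‖v‖ ≤ d²‖W‖` and the tested reduced weak formulation
`⟪𝒞W, W⟫ = ⟪𝒞G₂, W⟫ − ⟪g₁, v⟫` imply
`d⁻⁴‖v‖² + ‖W‖² ≤ (4·max(c₂,1)²/c₁²)(d⁴‖g₁‖² + ‖G₂‖²)`. -/
theorem stmt8 {H K : Type*}
    [NormedAddCommGroup H] [InnerProductSpace ℝ H]
    [NormedAddCommGroup K] [InnerProductSpace ℝ K]
    (d : ℝ) (hd : 0 < d)
    (𝒞 : K →ₗ[ℝ] K) (hsym : ∀ Q P : K, ⟪𝒞 Q, P⟫ = ⟪Q, 𝒞 P⟫)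
    (c₁ c₂ : ℝ) (hc₁ : 0 < c₁) (hc₁₂ : c₁ ≤ c₂)
    (hcoer : ∀ Q : K, c₁ * ‖Q‖ ^ 2 ≤ ⟪𝒞 Q, Q⟫)
    (hbdd : ∀ Q : K, ‖𝒞 Q‖ ≤ c₂ * ‖Q‖)
    (v g₁ : H) (W G₂ : K)
    (hP : ‖v‖ ≤ d ^ 2 * ‖W‖)
    (hW : ⟪𝒞 W, W⟫ = ⟪𝒞 G₂, W⟫ - ⟪g₁, v⟫) :
    (d ^ 4)⁻¹ * ‖v‖ ^ 2 + ‖W‖ ^ 2 ≤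
      4 * max c₂ 1 ^ 2 / c₁ ^ 2 * (d ^ 4 * ‖g₁‖ ^ 2 + ‖G₂‖ ^ 2) :=
  stmt8_general d 𝒞 c₁ c₂ hc₁ hcoer hbdd v g₁ W G₂ hP hW
end

section
/- Let U and V be real normed spaces and b : U × V → ℝ a bilinear form with |b(z, v)| ≤ C·‖z‖·‖v‖ for all z ∈ U, v ∈ V, and with c·‖z‖ ≤ sup { b(z, v)/‖v‖ : v ∈ V, v ≠ 0 } for all z ∈ U, where c, C > 0. Let U_h ⊆ U and V_h ⊆ V be subspaces and Π : V → V_h a linear map with ‖Π v‖ ≤ C_F·‖v‖ for all v ∈ V and b(w, v − Π v) = 0 for all w ∈ U_h, v ∈ V. Fix u ∈ U and define the discrete residual R_h(w) := sup { b(u − w, v_h)/‖v_h‖ : v_h ∈ V_h, v_h ≠ 0 } for w ∈ U_h. If u_h ∈ U_h satisfies R_h(u_h) ≤ R_h(w) for all w ∈ U_h, then ‖u − u_h‖ ≤ (1 + 2·C·C_F/c) · inf { ‖u − w‖ : w ∈ U_h }. -/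
/-!
The Fortin operator transfers the continuous inf-sup condition to the discrete test space:
for `z ∈ U_h`, `b(z, v) = b(z, Π v) ≤ R ‖Π v‖ ≤ C_F R ‖v‖` with `R` the discrete dual norm of
`b(z, ·)`, so `c ‖z‖ ≤ C_F R`. Apply this to `z = w - u_h`: splitting
`b(z, ·) = b(u - u_h, ·) - b(u - w, ·)` and using that `u_h` minimises the discrete residual gives
`R ≤ 2 C ‖u - w‖`, and the triangle inequality `‖u - u_h‖ ≤ ‖u - w‖ + ‖z‖` concludes.
-/

/-- For unbounded `ℓ` this is the junk value `0` of `Real.iSup`. -/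
noncomputable def dualNorm {E : Type*} [NormedAddCommGroup E] [Module ℝ E] (ℓ : E →ₗ[ℝ] ℝ) : ℝ :=
  ⨆ v : {v : E // v ≠ 0}, ℓ v / ‖(v : E)‖

section DualNorm

variable {E : Type*} [NormedAddCommGroup E] [Module ℝ E] (ℓ : E →ₗ[ℝ] ℝ)

theorem dualNorm_le {M : ℝ} (hM : 0 ≤ M) (h : ∀ v, ℓ v ≤ M * ‖v‖) : dualNorm ℓ ≤ M :=
  Real.iSup_le (fun v => (div_le_iff₀ (norm_pos_iff.mpr v.2)).mpr (h v)) hM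

theorem apply_le_dualNorm_mul_norm {K : ℝ} (hK : ∀ v, ℓ v ≤ K * ‖v‖) (v : E) :
    ℓ v ≤ dualNorm ℓ * ‖v‖ := by
  rcases eq_or_ne v 0 with rfl | hv
  · simp
  have hbdd : BddAbove (Set.range fun v : {v : E // v ≠ 0} => ℓ v / ‖(v : E)‖) :=
    ⟨K, by
      rintro _ ⟨v, rfl⟩
      exact (div_le_iff₀ (norm_pos_iff.mpr v.2)).mpr (hK v)⟩
  exact (div_le_iff₀ (norm_pos_iff.mpr hv)).mp (le_ciSup hbdd ⟨v, hv⟩)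

theorem dualNorm_nonneg : 0 ≤ dualNorm ℓ := by
  by_cases hbdd : BddAbove (Set.range fun v : {v : E // v ≠ 0} => ℓ v / ‖(v : E)‖)
  · rcases isEmpty_or_nonempty {v : E // v ≠ 0} with _ | ⟨v, hv⟩
    · exact (Real.iSup_of_isEmpty _).ge
    · have hpos := le_ciSup hbdd ⟨v, hv⟩
      have hneg := le_ciSup hbdd ⟨-v, neg_ne_zero.mpr hv⟩
      simp only [map_neg, norm_neg, neg_div] at hneg
      unfold dualNorm
      linarith
  · exact (Real.iSup_of_not_bddAbove hbdd).ge

theorem dualNorm_le_mul_dualNorm_domRestrict {S : Submodule ℝ E} {K CF : ℝ} (hCF : 0 ≤ CF)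
    (hK : ∀ v : S, ℓ v ≤ K * ‖v‖) (P : E → S) (hP : ∀ v, ‖(P v : E)‖ ≤ CF * ‖v‖)
    (hℓP : ∀ v, ℓ (v - P v) = 0) :
    dualNorm ℓ ≤ CF * dualNorm (ℓ.domRestrict S) := by
  have hR := dualNorm_nonneg (ℓ.domRestrict S)
  refine dualNorm_le ℓ (by positivity) fun v => ?_
  calc ℓ v = ℓ.domRestrict S (P v) := by
        simpa [sub_eq_zero] using hℓP v
    _ ≤ dualNorm (ℓ.domRestrict S) * ‖(P v : E)‖ := apply_le_dualNorm_mul_norm _ hK _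
    _ ≤ dualNorm (ℓ.domRestrict S) * (CF * ‖v‖) := by gcongr; exact hP v
    _ = CF * dualNorm (ℓ.domRestrict S) * ‖v‖ := by ring

end DualNorm

section Bilinear

variable {U V : Type*} [NormedAddCommGroup U] [NormedAddCommGroup V] [Module ℝ U] [Module ℝ V]
  {b : U →ₗ[ℝ] V →ₗ[ℝ] ℝ} {C : ℝ}

theorem dualNorm_domRestrict_le_of_bound (hC : 0 ≤ C)
    (hb : ∀ (z : U) (v : V), |b z v| ≤ C * ‖z‖ * ‖v‖) (S : Submodule ℝ V) (z : U) :
    dualNorm ((b z).domRestrict S) ≤ C * ‖z‖ :=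
  dualNorm_le _ (by positivity) fun v => (le_abs_self _).trans (hb z v)

theorem norm_sub_le_of_dualNorm_le {c CF : ℝ} (hc : 0 < c) (hC : 0 ≤ C) (hCF : 0 ≤ CF)
    (hb : ∀ (z : U) (v : V), |b z v| ≤ C * ‖z‖ * ‖v‖) (S : Submodule ℝ V) (u uh w : U)
    (hinfsup : c * ‖w - uh‖ ≤ CF * dualNorm ((b (w - uh)).domRestrict S))
    (hmin : dualNorm ((b (u - uh)).domRestrict S) ≤ dualNorm ((b (u - w)).domRestrict S)) :
    ‖u - uh‖ ≤ (1 + 2 * C * CF / c) * ‖u - w‖ := by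
  have hRuh : dualNorm ((b (u - uh)).domRestrict S) ≤ C * ‖u - w‖ :=
    hmin.trans (dualNorm_domRestrict_le_of_bound hC hb S _)
  have hR : dualNorm ((b (w - uh)).domRestrict S) ≤ 2 * C * ‖u - w‖ := by
    refine dualNorm_le _ (by positivity) fun v => ?_
    have h₁ := apply_le_dualNorm_mul_norm ((b (u - uh)).domRestrict S)
      (fun v => (le_abs_self _).trans (hb (u - uh) v)) v
    have h₂ := (neg_abs_le (b (u - w) v)).trans' (neg_le_neg (hb (u - w) v))
    have h₃ := mul_le_mul_of_nonneg_right hRuh (norm_nonneg v)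
    have hsplit : b (w - uh) v = b (u - uh) v - b (u - w) v := by
      rw [← LinearMap.sub_apply, ← map_sub, sub_sub_sub_cancel_left]
    simp only [LinearMap.domRestrict_apply, Submodule.coe_norm] at h₁ h₃ ⊢
    linarith
  have hz : ‖w - uh‖ ≤ 2 * C * CF / c * ‖u - w‖ := by
    rw [div_mul_eq_mul_div, le_div_iff₀ hc]
    linarith [mul_le_mul_of_nonneg_left hR hCF]
  calc ‖u - uh‖ = ‖(u - w) + (w - uh)‖ := by rw [sub_add_sub_cancel]
    _ ≤ ‖u - w‖ + ‖w - uh‖ := norm_add_le _ _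
    _ ≤ (1 + 2 * C * CF / c) * ‖u - w‖ := by linarith

end Bilinear

/-- Quasi-optimal convergence of the fully discrete ('practical') DPG method: if `b` is
bounded and satisfies the (continuous) inf-sup condition with constant `c`, and there is a
Fortin operator `Pf : V → V_h` with norm bound `C_F` and `b(w, v − Pf v) = 0` for `w ∈ U_h`,
then the minimizer `u_h` of the discrete residual
`R_h(w) = sup { b(u − w, v_h)/‖v_h‖ : v_h ∈ V_h, v_h ≠ 0 }` over `U_h` satisfies
`‖u − u_h‖ ≤ (1 + 2·C·C_F/c) · inf { ‖u − w‖ : w ∈ U_h }`. -/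
theorem stmt10 {U V : Type*} [NormedAddCommGroup U] [NormedSpace ℝ U]
    [NormedAddCommGroup V] [NormedSpace ℝ V]
    (b : U →ₗ[ℝ] V →ₗ[ℝ] ℝ) (c C CF : ℝ) (hc : 0 < c) (hC : 0 < C) (hCF : 0 < CF)
    (hb : ∀ (z : U) (v : V), |b z v| ≤ C * ‖z‖ * ‖v‖)
    (hinfsup : ∀ z : U, c * ‖z‖ ≤ ⨆ v : {v : V // v ≠ 0}, b z (v : V) / ‖(v : V)‖)
    (Uh : Submodule ℝ U) (Vh : Submodule ℝ V)
    (Pf : V →ₗ[ℝ] Vh)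
    (hbound : ∀ v : V, ‖(Pf v : V)‖ ≤ CF * ‖v‖)
    (horth : ∀ w ∈ Uh, ∀ v : V, b w (v - (Pf v : V)) = 0)
    (u uh : U) (huh : uh ∈ Uh)
    (hmin : ∀ w ∈ Uh,
      (⨆ vh : {vh : Vh // vh ≠ 0}, b (u - uh) ((vh : Vh) : V) / ‖((vh : Vh) : V)‖) ≤
      ⨆ vh : {vh : Vh // vh ≠ 0}, b (u - w) ((vh : Vh) : V) / ‖((vh : Vh) : V)‖) :
    ‖u - uh‖ ≤ (1 + 2 * C * CF / c) * ⨅ w : Uh, ‖u - (w : U)‖ := by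
  have hdiscrete : ∀ z ∈ Uh, c * ‖z‖ ≤ CF * dualNorm ((b z).domRestrict Vh) := fun z hz =>
    (hinfsup z).trans <| dualNorm_le_mul_dualNorm_domRestrict (b z) hCF.le
      (fun v => (le_abs_self _).trans (hb z v)) Pf hbound (horth z hz)
  have hcompetitor : ∀ w : Uh, ‖u - uh‖ ≤ (1 + 2 * C * CF / c) * ‖u - (w : U)‖ := fun w =>
    norm_sub_le_of_dualNorm_le hc hC.le hCF.le hb Vh u uh w
      (hdiscrete _ (Uh.sub_mem w.2 huh)) (hmin w w.2)
  rw [Real.mul_iInf_of_nonneg (by positivity)]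
  exact le_ciInf hcompetitor
end

section
/- Let R₁, R₂ > 0 and let v : ℝ² → ℝ be twice continuously differentiable with support contained in [0, R₁] × [0, R₂]. Then (∫_{ℝ²} v(x)² dx)^{1/2} ≤ min(R₁, R₂)² · (∫_{ℝ²} ‖D²v(x)‖² dx)^{1/2}, where D²v(x) denotes the second derivative of v at x (a continuous bilinear map on ℝ²) and ‖D²v(x)‖ its operator norm. -/
/-!
Integrating by parts along a direction `e` with `ℓ e = 1` against the affine function
`ℓ - (a + b) / 2`, which is bounded by `(b - a) / 2` on the slab `a ≤ ℓ ≤ b`, gives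
`∫ w² = -2 ∫ (ℓ - (a + b) / 2) w ∂ₑw ≤ (b - a) ‖w‖₂ ‖∂ₑw‖₂` for `w` supported in the slab, hence
`‖w‖₂ ≤ (b - a) ‖∂ₑw‖₂`. Since `∂ₑv` is supported in the same slab as `v`, applying this twice
across the shorter side of the rectangle gives `‖v‖₂ ≤ min(R₁, R₂)² ‖∂ₑ∂ₑv‖₂`, and
`|∂ₑ∂ₑv| ≤ ‖D²v‖` pointwise.
-/

open MeasureTheory Set Function

theorem integral_abs_mul_abs_le_sqrt_mul_sqrt {α : Type*} [MeasurableSpace α] {μ : Measure α}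
    {f g : α → ℝ} (hf : MemLp f 2 μ) (hg : MemLp g 2 μ) :
    ∫ a, |f a| * |g a| ∂μ ≤ √(∫ a, f a ^ 2 ∂μ) * √(∫ a, g a ^ 2 ∂μ) := by
  have two : ENNReal.ofReal 2 = 2 := by norm_num
  have h := integral_mul_le_Lp_mul_Lq_of_nonneg (μ := μ) Real.HolderConjugate.two_two
    (.of_forall fun a => abs_nonneg (f a)) (.of_forall fun a => abs_nonneg (g a))
    (two ▸ hf.abs) (two ▸ hg.abs)
  simpa only [Real.rpow_two, sq_abs, ← Real.sqrt_eq_rpow] using h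

theorem norm_fderiv_fderiv_apply_le {𝕜 E F : Type*} [NontriviallyNormedField 𝕜]
    [NormedAddCommGroup E] [NormedSpace 𝕜 E] [NormedAddCommGroup F] [NormedSpace 𝕜 F]
    {f : E → F} {x : E} (hf : DifferentiableAt 𝕜 (fderiv 𝕜 f) x) (e : E) :
    ‖fderiv 𝕜 (fun y => fderiv 𝕜 f y e) x e‖ ≤ ‖iteratedFDeriv 𝕜 2 f x‖ * ‖e‖ ^ 2 := by
  have h : fderiv 𝕜 (fun y => fderiv 𝕜 f y e) x e = iteratedFDeriv 𝕜 2 f x ![e, e] := by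
    rw [iteratedFDeriv_two_apply, fderiv_clm_apply hf (differentiableAt_const e)]
    simp
  rw [h, sq]
  simpa using (iteratedFDeriv 𝕜 2 f x).le_opNorm ![e, e]

theorem EuclideanSpace.isCompact_setOf_forall_mem_Icc {ι : Type*} [Fintype ι] (a b : ι → ℝ) :
    IsCompact {x : EuclideanSpace ℝ ι | ∀ i, x i ∈ Icc (a i) (b i)} := by
  have h : {x : EuclideanSpace ℝ ι | ∀ i, x i ∈ Icc (a i) (b i)} =
      EuclideanSpace.equiv ι ℝ ⁻¹' Icc a b := by
    ext x
    simp [Pi.le_def, forall_and]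
  rw [h]
  exact (EuclideanSpace.equiv ι ℝ).toHomeomorph.isCompact_preimage.mpr isCompact_Icc

section Slab

variable {E : Type*} [NormedAddCommGroup E] [NormedSpace ℝ E] [FiniteDimensional ℝ E]
  [MeasurableSpace E] [BorelSpace E] {μ : Measure E} [μ.IsAddHaarMeasure]
  {w : E → ℝ} {ℓ : E →L[ℝ] ℝ} {e : E}

theorem integral_sq_eq_neg_integral_sub_mul_fderiv_sq (hw : ContDiff ℝ 1 w)
    (hc : HasCompactSupport w) (he : ℓ e = 1) (c : ℝ) :
    ∫ x, w x ^ 2 ∂μ = -∫ x, (ℓ x - c) * (2 * w x * fderiv ℝ w x e) ∂μ := by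
  have hwd : Differentiable ℝ w := hw.differentiable one_ne_zero
  have hw'c : Continuous fun x => fderiv ℝ w x e :=
    (hw.continuous_fderiv one_ne_zero).clm_apply continuous_const
  have hint {g : E → ℝ} (hg : Continuous g) (h0 : ∀ x, w x = 0 → g x = 0) : Integrable g μ :=
    hg.integrable_of_hasCompactSupport (hc.mono fun x hx => mt (h0 x) hx)
  have hℓ' (x : E) : fderiv ℝ (fun y => ℓ y - c) x e = 1 := by
    rw [(ℓ.hasFDerivAt.sub_const c).fderiv, he]
  have hw2' (x : E) : fderiv ℝ (fun y => w y ^ 2) x e = 2 * w x * fderiv ℝ w x e := by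
    simp [fderiv_fun_pow 2 (hwd x)]
  have ibp := integral_mul_fderiv_eq_neg_fderiv_mul_of_integrable (μ := μ) (v := e)
    (f := fun y => ℓ y - c) (g := fun y => w y ^ 2)
    (by simp only [hℓ', one_mul]; exact hint (hw.continuous.pow 2) (by simp +contextual))
    (by simp only [hw2']; exact hint (by fun_prop) (by simp +contextual))
    (hint (by fun_prop) (by simp +contextual))
    (fun x _ => ℓ.differentiableAt.sub_const c) (fun x _ => (hwd x).pow 2)
  simp only [hℓ', hw2', one_mul] at ibp
  rw [ibp, neg_neg]

theorem integral_sq_le_of_support_subset_slab (hw : ContDiff ℝ 1 w) (hc : HasCompactSupport w)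
    (he : ℓ e = 1) {a b : ℝ} (hs : support w ⊆ ℓ ⁻¹' Icc a b) :
    ∫ x, w x ^ 2 ∂μ ≤ (b - a) ^ 2 * ∫ x, fderiv ℝ w x e ^ 2 ∂μ := by
  set w' : E → ℝ := fun x => fderiv ℝ w x e
  set φ : E → ℝ := fun x => ℓ x - (a + b) / 2
  have hw'c : Continuous w' := (hw.continuous_fderiv one_ne_zero).clm_apply continuous_const
  have hint {g : E → ℝ} (hg : Continuous g) (h0 : ∀ x, w x = 0 → g x = 0) : Integrable g μ :=
    hg.integrable_of_hasCompactSupport (hc.mono fun x hx => mt (h0 x) hx)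
  have hpt (x : E) : -(φ x * (2 * w x * w' x)) ≤ |b - a| * (|w x| * |w' x|) := by
    by_cases h0 : w x = 0
    · simp [h0]
    have hφx : 2 * |φ x| ≤ |b - a| := by
      obtain ⟨hax, hxb⟩ := hs h0
      have : |ℓ x - (a + b) / 2| ≤ (b - a) / 2 := abs_le.2 ⟨by linarith, by linarith⟩
      linarith [le_abs_self (b - a)]
    calc -(φ x * (2 * w x * w' x)) ≤ |φ x * (2 * w x * w' x)| := neg_le_abs _
      _ = 2 * |φ x| * (|w x| * |w' x|) := by simp only [abs_mul, abs_two]; ring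
      _ ≤ |b - a| * (|w x| * |w' x|) := by gcongr
  have hCS := integral_abs_mul_abs_le_sqrt_mul_sqrt (μ := μ)
    (hw.continuous.memLp_of_hasCompactSupport hc)
    (hw'c.memLp_of_hasCompactSupport (hc.fderiv_apply ℝ e))
  set X := √(∫ x, w x ^ 2 ∂μ) with hXdef
  set Y := √(∫ x, w' x ^ 2 ∂μ) with hYdef
  have hXY : X ^ 2 ≤ |b - a| * (X * Y) :=
    calc X ^ 2 = ∫ x, w x ^ 2 ∂μ := Real.sq_sqrt (integral_nonneg fun x => sq_nonneg (w x))
      _ = ∫ x, -(φ x * (2 * w x * w' x)) ∂μ := by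
        rw [integral_neg]; exact integral_sq_eq_neg_integral_sub_mul_fderiv_sq hw hc he _
      _ ≤ ∫ x, |b - a| * (|w x| * |w' x|) ∂μ :=
        integral_mono (hint (by fun_prop) (by simp +contextual))
          ((hint (by fun_prop) (by simp +contextual)).const_mul _) hpt
      _ = |b - a| * ∫ x, |w x| * |w' x| ∂μ := integral_const_mul _ _
      _ ≤ |b - a| * (X * Y) := by gcongr
  rw [← Real.sq_sqrt (integral_nonneg fun x => sq_nonneg (w x)),
    ← Real.sq_sqrt (integral_nonneg fun x => sq_nonneg (w' x)), ← hXdef, ← hYdef,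
    ← sq_abs (b - a)]
  nlinarith [sq_nonneg (X - |b - a| * Y)]

theorem integral_sq_le_integral_sq_norm_iteratedFDeriv_two_of_support_subset_slab
    (hw : ContDiff ℝ 2 w) (hc : HasCompactSupport w) (he : ℓ e = 1) (he1 : ‖e‖ ≤ 1) {a b : ℝ}
    (hs : support w ⊆ ℓ ⁻¹' Icc a b) :
    ∫ x, w x ^ 2 ∂μ ≤ (b - a) ^ 4 * ∫ x, ‖iteratedFDeriv ℝ 2 w x‖ ^ 2 ∂μ := by
  set w' : E → ℝ := fun x => fderiv ℝ w x e
  have hfd : ContDiff ℝ 1 (fderiv ℝ w) := hw.fderiv_right le_rfl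
  have hw' : ContDiff ℝ 1 w' := hfd.clm_apply contDiff_const
  have hs' : support w' ⊆ ℓ ⁻¹' Icc a b := fun x hx =>
    closure_minimal hs (isClosed_Icc.preimage ℓ.continuous)
      (support_fderiv_subset ℝ fun h => hx (by simp only [w', h, zero_apply]))
  have hw'' (x : E) : fderiv ℝ w' x e ^ 2 ≤ ‖iteratedFDeriv ℝ 2 w x‖ ^ 2 := by
    rw [← sq_abs, ← Real.norm_eq_abs]
    gcongr
    calc ‖fderiv ℝ w' x e‖ ≤ ‖iteratedFDeriv ℝ 2 w x‖ * ‖e‖ ^ 2 :=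
          norm_fderiv_fderiv_apply_le (hfd.differentiable one_ne_zero x) e
      _ ≤ ‖iteratedFDeriv ℝ 2 w x‖ :=
          mul_le_of_le_one_right (norm_nonneg _) (pow_le_one₀ (norm_nonneg e) he1)
  have hw''c : Continuous fun x => fderiv ℝ w' x e :=
    (hw'.continuous_fderiv one_ne_zero).clm_apply continuous_const
  have hint₁ : Integrable (fun x => fderiv ℝ w' x e ^ 2) μ :=
    (hw''c.pow 2).integrable_of_hasCompactSupport
      (((hc.fderiv_apply ℝ e).fderiv_apply ℝ e).mono fun x hx => by simpa using hx)
  have hint₂ : Integrable (fun x => ‖iteratedFDeriv ℝ 2 w x‖ ^ 2) μ :=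
    ((hw.continuous_iteratedFDeriv le_rfl).norm.pow 2).integrable_of_hasCompactSupport
      ((hc.iteratedFDeriv (𝕜 := ℝ) 2).mono fun x hx => by simpa using hx)
  calc ∫ x, w x ^ 2 ∂μ ≤ (b - a) ^ 2 * ∫ x, w' x ^ 2 ∂μ :=
        integral_sq_le_of_support_subset_slab (hw.of_le one_le_two) hc he hs
    _ ≤ (b - a) ^ 2 * ((b - a) ^ 2 * ∫ x, fderiv ℝ w' x e ^ 2 ∂μ) := by
        gcongr
        exact integral_sq_le_of_support_subset_slab hw' (hc.fderiv_apply ℝ e) he hs'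
    _ ≤ (b - a) ^ 2 * ((b - a) ^ 2 * ∫ x, ‖iteratedFDeriv ℝ 2 w x‖ ^ 2 ∂μ) := by
        gcongr (b - a) ^ 2 * ((b - a) ^ 2 * ?_)
        exact integral_mono hint₁ hint₂ hw''
    _ = (b - a) ^ 4 * ∫ x, ‖iteratedFDeriv ℝ 2 w x‖ ^ 2 ∂μ := by ring

end Slab

theorem stmt12_general (R₁ R₂ : ℝ)
    (v : EuclideanSpace ℝ (Fin 2) → ℝ) (hv : ContDiff ℝ 2 v)
    (hsupp : Function.support v ⊆
      {x : EuclideanSpace ℝ (Fin 2) | x 0 ∈ Set.Icc (0 : ℝ) R₁ ∧ x 1 ∈ Set.Icc (0 : ℝ) R₂}) :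
    Real.sqrt (∫ x, v x ^ 2) ≤ min R₁ R₂ ^ 2 * Real.sqrt (∫ x, ‖iteratedFDeriv ℝ 2 v x‖ ^ 2) := by
  have hc : HasCompactSupport v :=
    .of_support_subset_isCompact (EuclideanSpace.isCompact_setOf_forall_mem_Icc 0 ![R₁, R₂])
      fun x hx => by simpa [Fin.forall_fin_two] using hsupp hx
  obtain ⟨i, hi⟩ : ∃ i : Fin 2, support v ⊆ EuclideanSpace.proj i ⁻¹' Icc 0 (min R₁ R₂) := by
    rcases le_total R₁ R₂ with h | h
    · exact ⟨0, fun x hx => by simpa [min_eq_left h] using (hsupp hx).1⟩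
    · exact ⟨1, fun x hx => by simpa [min_eq_right h] using (hsupp hx).2⟩
  have key := integral_sq_le_integral_sq_norm_iteratedFDeriv_two_of_support_subset_slab
    (μ := volume) hv hc (e := EuclideanSpace.single i 1) (by simp) (by simp) hi
  rw [sub_zero, show 4 = 2 * 2 from rfl, pow_mul] at key
  calc √(∫ x, v x ^ 2) ≤ √((min R₁ R₂ ^ 2) ^ 2 * ∫ x, ‖iteratedFDeriv ℝ 2 v x‖ ^ 2) :=
        Real.sqrt_le_sqrt key
    _ = min R₁ R₂ ^ 2 * √(∫ x, ‖iteratedFDeriv ℝ 2 v x‖ ^ 2) := by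
        rw [Real.sqrt_mul (by positivity), Real.sqrt_sq (by positivity)]

/-- Second-order Poincaré-type inequality on the rectangle `[0,R₁] × [0,R₂]` with constant
`min(R₁,R₂)²`: for `v : ℝ² → ℝ` twice continuously differentiable with support contained in
`[0,R₁] × [0,R₂]`, `(∫ v²)^(1/2) ≤ min(R₁,R₂)² · (∫ ‖D²v‖²)^(1/2)`, where `D²v(x)` is the
second derivative (a continuous bilinear map) and `‖·‖` its operator norm. -/
theorem stmt12 (R₁ R₂ : ℝ) (hR₁ : 0 < R₁) (hR₂ : 0 < R₂)
    (v : EuclideanSpace ℝ (Fin 2) → ℝ) (hv : ContDiff ℝ 2 v)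
    (hsupp : Function.support v ⊆
      {x : EuclideanSpace ℝ (Fin 2) | x 0 ∈ Set.Icc (0 : ℝ) R₁ ∧ x 1 ∈ Set.Icc (0 : ℝ) R₂}) :
    Real.sqrt (∫ x, v x ^ 2) ≤ min R₁ R₂ ^ 2 * Real.sqrt (∫ x, ‖iteratedFDeriv ℝ 2 v x‖ ^ 2) :=
  stmt12_general R₁ R₂ v hv hsupp
end
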